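/- arXiv:2403.14491 — 6 statements merged into one kernel-verified Lean document; each statement's English description precedes it below -/
import Mathlib

section
/- Let N be an orchard network. The map σ sending each cherry reduction sequence (N_0, N_1, ..., N_s) of N (where N_{i+1} = CR(N_i, u_i)) to the word (u_0, u_1, ..., u_{s-1}) is well-defined into the set of permutations of T(int N) (i.e. the u_i are pairwise distinct and exhaust T(int N)), and σ is injective. -/
open Set

namespace Phylo

variable {V : Type*}

/-- In-degree of a node in a digraph given by its edge relation. -/
noncomputable def inDeg (N : V → V → Prop) (v : V) : ℕ := {u | N u v}.ncard

/-- Out-degree of a node. -/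
noncomputable def outDeg (N : V → V → Prop) (v : V) : ℕ := {w | N v w}.ncard

/-- Reachability: existence of a directed path. -/
def Reach (N : V → V → Prop) : V → V → Prop := Relation.ReflTransGen N

/-- Leaves: nodes of out-degree 0. -/
def leaves (N : V → V → Prop) : Set V := {v | outDeg N v = 0}

/-- Internal tree nodes, i.e. the set `T(int N)`. -/
def ITN (N : V → V → Prop) : Set V := {v | inDeg N v ≤ 1 ∧ 1 ≤ outDeg N v}

/-- A (rooted) phylogenetic network structure on the digraph `N` with root `ρ`. -/
structure IsPhyloNet (N : V → V → Prop) (ρ : V) : Prop where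
  acyclic : ∀ v, ¬ Relation.TransGen N v v
  root_indeg : inDeg N ρ = 0
  root_connects : ∀ v, Reach N ρ v
  retic_out : ∀ v, 2 ≤ inDeg N v → outDeg N v = 1
  no_elementary : ∀ v, ¬ (inDeg N v = 1 ∧ outDeg N v = 1)

/-- Binarity of a phylogenetic network. -/
structure IsBinary (N : V → V → Prop) (ρ : V) : Prop where
  retic_deg : ∀ v, 2 ≤ inDeg N v → inDeg N v = 2 ∧ outDeg N v = 1
  tree_deg : ∀ v, v ≠ ρ → inDeg N v ≤ 1 → 1 ≤ outDeg N v →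
      inDeg N v = 1 ∧ outDeg N v = 2
  root_deg : outDeg N ρ = 2 ∨ outDeg N ρ = 0

/-- Tree-child: every internal node has a child of tree type (in-degree ≤ 1). -/
def IsTreeChild (N : V → V → Prop) : Prop :=
  ∀ v, 1 ≤ outDeg N v → ∃ w, N v w ∧ inDeg N w ≤ 1

/-- `u` is the tree-node root of a cherry. -/
def IsCherryRoot (N : V → V → Prop) (u : V) : Prop :=
  inDeg N u ≤ 1 ∧ ∃ x y, x ≠ y ∧ N u x ∧ N u y ∧ outDeg N x = 0 ∧ outDeg N y = 0 ∧
    ∀ w, N u w → w = x ∨ w = y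

/-- `u` is the tree-node root of a reticulated cherry. -/
def IsRetCherryRoot (N : V → V → Prop) (u : V) : Prop :=
  inDeg N u ≤ 1 ∧ ∃ h y, h ≠ y ∧ N u h ∧ N u y ∧ 2 ≤ inDeg N h ∧ outDeg N y = 0 ∧
    (∃ x, N h x ∧ outDeg N x = 0 ∧ ∀ w, N h w → w = x) ∧
    ∀ w, N u w → w = h ∨ w = y

/-- Terminal node: root of a cherry or of a reticulated cherry. -/
def IsTerminal (N : V → V → Prop) (u : V) : Prop :=
  IsCherryRoot N u ∨ IsRetCherryRoot N u

/-- Cherry reduction rooted at `u`: remove all descendant edges of `u`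
(and hence all strict descendant tree nodes of `u` become isolated/removed). -/
def CR (N : V → V → Prop) (u : V) : V → V → Prop :=
  fun a b => N a b ∧ ¬ Reach N u a

/-- `IsCRSeq N L` : `L` is the list of reduced nodes of a full cherry reduction
sequence of `N`, ending in a single-node network (no edges left). -/
def IsCRSeq : (V → V → Prop) → List V → Prop
  | N, [] => ∀ a b, ¬ N a b
  | N, u :: us => IsTerminal N u ∧ IsCRSeq (CR N u) us

/-- Orchard networks: those admitting a full cherry reduction sequence. -/
def IsOrchard (N : V → V → Prop) : Prop := ∃ L, IsCRSeq N L

/-- Underlying undirected graph of a digraph. -/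
def underlying (N : V → V → Prop) : SimpleGraph V := SimpleGraph.fromRel N

/-- Cover relation of the reachability poset on internal tree nodes. -/
def Covers (N : V → V → Prop) (u v : V) : Prop :=
  u ∈ ITN N ∧ v ∈ ITN N ∧ u ≠ v ∧ Reach N u v ∧
    ¬ ∃ z ∈ ITN N, z ≠ u ∧ z ≠ v ∧ Reach N u z ∧ Reach N z v

/-- Biconnected set of nodes of an undirected graph. -/
def IsBiconn (G : SimpleGraph V) (B : Set V) : Prop :=
  B.Nonempty ∧ (G.induce B).Preconnected ∧ ∀ v ∈ B, (G.induce (B \ {v})).Preconnected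

/-- Blob: maximal biconnected component. -/
def IsBlob (G : SimpleGraph V) (B : Set V) : Prop :=
  IsBiconn G B ∧ ∀ B', IsBiconn G B' → B ⊆ B' → B' = B

/-- Level of a network: maximum number of reticulations in a blob. -/
noncomputable def level (N : V → V → Prop) : ℕ :=
  sSup {k | ∃ B, IsBlob (underlying N) B ∧ k = (B ∩ {v | 2 ≤ inDeg N v}).ncard}

/-- `H` is a minor of `G`, presented by branch sets. -/
def IsMinorOf {α β : Type*} (H : SimpleGraph β) (G : SimpleGraph α) : Prop :=
  ∃ f : β → Set α,
    (∀ b, (f b).Nonempty) ∧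
    (∀ b, (G.induce (f b)).Preconnected) ∧
    (∀ b b', b ≠ b' → Disjoint (f b) (f b')) ∧
    (∀ b b', H.Adj b b' → ∃ x ∈ f b, ∃ y ∈ f b', G.Adj x y)

/-- A list is a linear extension of the reachability poset on `T(int N)`. -/
def IsLinExtList (N : V → V → Prop) (L : List V) : Prop :=
  L.Nodup ∧ (∀ v, v ∈ L ↔ v ∈ ITN N) ∧
  ∀ (i j : ℕ) (hi : i < L.length) (hj : j < L.length),
    Reach N (L.get ⟨i, hi⟩) (L.get ⟨j, hj⟩) → i ≤ j

/-- A list is a linear extension of the order-dual of the reachability poset. -/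
def IsDualLinExtList (N : V → V → Prop) (L : List V) : Prop :=
  L.Nodup ∧ (∀ v, v ∈ L ↔ v ∈ ITN N) ∧
  ∀ (i j : ℕ) (hi : i < L.length) (hj : j < L.length),
    Reach N (L.get ⟨j, hj⟩) (L.get ⟨i, hi⟩) → i ≤ j

end Phylo

open Phylo

/-!
Every strict descendant of a terminal node `u` is a leaf or a reticulation, so reducing the
cherry at `u` removes exactly `u` from `T(int N)` and leaves the degrees of all other nodes not
below `u` unchanged; hence the word of a full reduction sequence enumerates `T(int N)` without
repetition. Conversely the reduced network determines `u`: if `CR N u = CR N v` then the edges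
out of `u` are deleted by reducing at `v`, so `v` reaches `u`, and symmetrically `u` reaches `v`,
which forces `u = v` in an acyclic network.
-/

namespace Phylo

variable {V : Type*} {N : V → V → Prop} {u v w : V}

theorem not_mem_ITN_of_outDeg_eq_zero (hv : outDeg N v = 0) : v ∉ ITN N := fun h => by
  have := h.2
  omega

theorem not_mem_ITN_of_two_le_inDeg (hv : 2 ≤ inDeg N v) : v ∉ ITN N := fun h => by
  have := h.1
  omega

section Degrees

variable [Finite V]

theorem outDeg_eq_zero_iff : outDeg N v = 0 ↔ ∀ w, ¬ N v w := by
  rw [outDeg, Set.ncard_eq_zero, Set.eq_empty_iff_forall_notMem]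
  rfl

theorem one_le_outDeg_iff : 1 ≤ outDeg N v ↔ ∃ w, N v w := by
  rw [Nat.one_le_iff_ne_zero, Ne, outDeg_eq_zero_iff]
  push Not
  rfl

theorem eq_of_reach_of_outDeg_eq_zero (hv : outDeg N v = 0) (h : Reach N v w) : w = v := by
  rcases Relation.ReflTransGen.cases_head_iff.mp h with rfl | ⟨c, hvc, -⟩
  · rfl
  · exact absurd hvc (outDeg_eq_zero_iff.mp hv c)

theorem ITN_eq_empty_of_forall_not (hN : ∀ a b, ¬ N a b) : ITN N = ∅ :=
  Set.eq_empty_of_forall_notMem fun v =>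
    not_mem_ITN_of_outDeg_eq_zero (outDeg_eq_zero_iff.mpr (hN v))

end Degrees

theorem IsTerminal.exists_child (h : IsTerminal N u) : ∃ w, N u w := by
  rcases h with ⟨-, x, -, -, hux, -⟩ | ⟨-, h, -, -, huh, -⟩
  exacts [⟨x, hux⟩, ⟨h, huh⟩]

theorem IsTerminal.mem_ITN [Finite V] (h : IsTerminal N u) : u ∈ ITN N := by
  refine ⟨?_, one_le_outDeg_iff.mpr h.exists_child⟩
  rcases h with ⟨hin, -⟩ | ⟨hin, -⟩ <;> exact hin

theorem IsTerminal.not_mem_ITN_of_reach [Finite V] (hu : IsTerminal N u) (huv : Reach N u v)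
    (hvu : v ≠ u) : v ∉ ITN N := by
  rcases Relation.ReflTransGen.cases_head_iff.mp huv with rfl | ⟨c, huc, hcv⟩
  · exact absurd rfl hvu
  rcases hu with ⟨-, x, y, -, -, -, hx, hy, hchild⟩ |
    ⟨-, h, y, -, -, -, hh, hy, ⟨x, hhx, hx, hhchild⟩, hchild⟩
  · rcases hchild c huc with rfl | rfl
    · exact eq_of_reach_of_outDeg_eq_zero hx hcv ▸ not_mem_ITN_of_outDeg_eq_zero hx
    · exact eq_of_reach_of_outDeg_eq_zero hy hcv ▸ not_mem_ITN_of_outDeg_eq_zero hy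
  · rcases hchild c huc with rfl | rfl
    · rcases Relation.ReflTransGen.cases_head_iff.mp hcv with rfl | ⟨d, hcd, hdv⟩
      · exact not_mem_ITN_of_two_le_inDeg hh
      · obtain rfl := hhchild d hcd
        exact eq_of_reach_of_outDeg_eq_zero hx hdv ▸ not_mem_ITN_of_outDeg_eq_zero hx
    · exact eq_of_reach_of_outDeg_eq_zero hy hcv ▸ not_mem_ITN_of_outDeg_eq_zero hy

theorem ITN_CR_of_forall_reach_not_mem [Finite V]
    (hu : ∀ v, Reach N u v → v ≠ u → v ∉ ITN N) : ITN (CR N u) = ITN N \ {u} := by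
  ext v
  by_cases huv : Reach N u v
  · have hout : outDeg (CR N u) v = 0 := outDeg_eq_zero_iff.mpr fun w hvw => hvw.2 huv
    simp only [Set.mem_sdiff, Set.mem_singleton_iff, not_mem_ITN_of_outDeg_eq_zero hout,
      false_iff, not_and, not_not]
    exact fun hv => by_contra fun hvu => hu v huv hvu hv
  · have hin : {a | CR N u a v} = {a | N a v} :=
      Set.ext fun a => ⟨And.left, fun hav => ⟨hav, fun hua => huv (hua.tail hav)⟩⟩
    have hout : {w | CR N u v w} = {w | N v w} :=
      Set.ext fun w => ⟨And.left, fun hvw => ⟨hvw, huv⟩⟩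
    have hvu : v ≠ u := by
      rintro rfl
      exact huv Relation.ReflTransGen.refl
    simp only [ITN, inDeg, outDeg, hin, hout, Set.mem_sdiff, Set.mem_ofPred_eq,
      Set.mem_singleton_iff, hvu, not_false_eq_true, and_true]

theorem IsTerminal.ITN_CR [Finite V] (hu : IsTerminal N u) : ITN (CR N u) = ITN N \ {u} :=
  ITN_CR_of_forall_reach_not_mem fun _ => hu.not_mem_ITN_of_reach

theorem IsCRSeq.mem_iff [Finite V] {L : List V} (hL : IsCRSeq N L) : v ∈ L ↔ v ∈ ITN N := by
  induction L generalizing N with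
  | nil => simp [ITN_eq_empty_of_forall_not hL]
  | cons u us ih =>
    rw [List.mem_cons, ih hL.2, hL.1.ITN_CR, Set.mem_sdiff, Set.mem_singleton_iff]
    have := hL.1.mem_ITN
    by_cases hvu : v = u
    · simp [hvu, this]
    · simp [hvu]

theorem IsCRSeq.nodup [Finite V] {L : List V} (hL : IsCRSeq N L) : L.Nodup := by
  induction L generalizing N with
  | nil => exact List.nodup_nil
  | cons u us ih =>
    refine List.nodup_cons.mpr ⟨fun hu => ?_, ih hL.2⟩
    have := hL.2.mem_iff.mp hu
    rw [hL.1.ITN_CR] at this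
    exact this.2 rfl

theorem acyclic_CR (hN : ∀ w, ¬ Relation.TransGen N w w) (u : V) :
    ∀ w, ¬ Relation.TransGen (CR N u) w w :=
  fun w h => hN w (Relation.TransGen.mono (fun _ _ hab => hab.1) w w h)

theorem eq_of_CR_eq (hN : ∀ w, ¬ Relation.TransGen N w w) (hu : ∃ x, N u x)
    (hv : ∃ y, N v y) (h : CR N u = CR N v) : u = v := by
  obtain ⟨x, hux⟩ := hu
  obtain ⟨y, hvy⟩ := hv
  have hvu : Reach N v u := by
    by_contra hvu
    have : CR N u u x := h ▸ ⟨hux, hvu⟩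
    exact this.2 Relation.ReflTransGen.refl
  have huv : Reach N u v := by
    by_contra huv
    have : CR N v v y := h ▸ ⟨hvy, huv⟩
    exact this.2 Relation.ReflTransGen.refl
  rcases Relation.reflTransGen_iff_eq_or_transGen.mp huv with rfl | huv
  · rfl
  · exact absurd (huv.trans_left hvu) (hN u)

theorem IsCRSeq.eq_of_scanl_eq (hN : ∀ w, ¬ Relation.TransGen N w w) {L₁ L₂ : List V}
    (h₁ : IsCRSeq N L₁) (h₂ : IsCRSeq N L₂) (h : L₁.scanl CR N = L₂.scanl CR N) : L₁ = L₂ := by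
  induction L₁ generalizing N L₂ with
  | nil => cases L₂ <;> simp_all
  | cons u us ih =>
    cases L₂ with
    | nil => simp at h
    | cons v vs =>
      simp only [List.scanl_cons, List.cons.injEq, true_and] at h
      have hCR : CR N u = CR N v := by simpa using congrArg List.head? h
      obtain rfl := eq_of_CR_eq hN h₁.1.exists_child h₂.1.exists_child hCR
      rw [ih (acyclic_CR hN u) h₁.2 h₂.2 h]

end Phylo

theorem stmt1_general {V : Type*} [Fintype V] (N : V → V → Prop) (ρ : V)
    (hphy : IsPhyloNet N ρ) :
    (∀ L : List V, IsCRSeq N L → L.Nodup ∧ (∀ v, v ∈ L ↔ v ∈ ITN N)) ∧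
    (∀ L₁ L₂ : List V, IsCRSeq N L₁ → IsCRSeq N L₂ →
      List.scanl CR N L₁ = List.scanl CR N L₂ → L₁ = L₂) :=
  ⟨fun _ hL => ⟨hL.nodup, fun _ => hL.mem_iff⟩,
    fun _ _ h₁ h₂ => h₁.eq_of_scanl_eq hphy.acyclic h₂⟩

/-- the map σ from cherry reduction sequences to words of reduced
nodes is well-defined into the permutations of `T(int N)` and injective. -/
theorem stmt1 {V : Type*} [Fintype V] (N : V → V → Prop) (ρ : V)
    (hphy : IsPhyloNet N ρ) (hbin : IsBinary N ρ) (horch : IsOrchard N) :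
    (∀ L : List V, IsCRSeq N L → L.Nodup ∧ (∀ v, v ∈ L ↔ v ∈ ITN N)) ∧
    (∀ L₁ L₂ : List V, IsCRSeq N L₁ → IsCRSeq N L₂ →
      List.scanl CR N L₁ = List.scanl CR N L₂ → L₁ = L₂) :=
  stmt1_general N ρ hphy
end

section
/- Let N be a binary tree-child phylogenetic network. For any internal tree node u of N, u is terminal (i.e., u is the root of a cherry or of a reticulated cherry) if and only if u is maximal in the poset T(int N) of internal tree nodes ordered by reachability (u ⪯ v iff there is a directed path from u to v in N). -/
open Set

open Phylo

/-- in a binary tree-child network, an internal tree node is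
terminal iff it is maximal in the reachability poset on `T(int N)`. -/
theorem stmt2 {V : Type*} [Fintype V] (N : V → V → Prop) (ρ : V)
    (hphy : IsPhyloNet N ρ) (hbin : IsBinary N ρ) (htc : IsTreeChild N)
    (u : V) (hu : u ∈ ITN N) :
    IsTerminal N u ↔ (∀ v ∈ ITN N, Reach N u v → v = u) := by
  classical
  have hempty : ∀ c, outDeg N c = 0 → ∀ w, ¬ N c w := by
    intro c hc w hw
    have h0 : {w | N c w} = ∅ := (Set.ncard_eq_zero (Set.toFinite _)).mp hc
    exact absurd (h0 ▸ hw : w ∈ (∅ : Set V)) (by simp)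
  have leafAbs : ∀ c v, outDeg N c = 0 → Reach N c v → v ∈ ITN N → False := by
    intro c v hc hr hv
    rcases hr.cases_head with rfl | ⟨w, hw, _⟩
    · have := hv.2; omega
    · exact hempty c hc w hw
  constructor
  · intro hterm v hv hreach
    rcases hreach.cases_head with h | ⟨w, huw, hwv⟩
    · exact h.symm
    rcases hterm with ⟨_, x, y, hxy, hux, huy, hx0, hy0, hch⟩ |
        ⟨_, h, y, hhy, huh, huy, hh2, hy0, ⟨x, hhx, hx0, hxall⟩, hch⟩
    · rcases hch w huw with rfl | rfl
      · exact absurd (leafAbs w v hx0 hwv hv) not_false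
      · exact absurd (leafAbs w v hy0 hwv hv) not_false
    · rcases hch w huw with rfl | rfl
      · rcases hwv.cases_head with rfl | ⟨w', hww', hw'v⟩
        · have := hv.1; omega
        · have hw'x : w' = x := hxall w' hww'
          exact absurd (leafAbs w' v (hw'x.symm ▸ hx0) hw'v hv) not_false
      · exact absurd (leafAbs w v hy0 hwv hv) not_false
  · intro hmax
    have hout2 : outDeg N u = 2 := by
      by_cases h : u = ρ
      · subst h
        rcases hbin.root_deg with h2 | h0
        · exact h2
        · have := hu.2; omega
      · exact (hbin.tree_deg u h hu.1 hu.2).2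
    obtain ⟨x, y, hxy, hset⟩ := Set.ncard_eq_two.mp hout2
    have hux : N u x := by
      have : x ∈ {w | N u w} := by rw [hset]; exact Set.mem_insert _ _
      exact this
    have huy : N u y := by
      have : y ∈ {w | N u w} := by rw [hset]; simp
      exact this
    have hch : ∀ w, N u w → w = x ∨ w = y := by
      intro w hw
      have : w ∈ ({x, y} : Set V) := hset ▸ hw
      simpa using this
    -- any child of u with small indegree is a leaf
    have childcase : ∀ c, N u c → inDeg N c ≤ 1 → outDeg N c = 0 := by
      intro c hc hcin
      by_contra h
      have hcITN : c ∈ ITN N := ⟨hcin, Nat.one_le_iff_ne_zero.mpr h⟩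
      have hcu := hmax c hcITN (Relation.ReflTransGen.single hc)
      subst hcu
      exact hphy.acyclic c (Relation.TransGen.single hc)
    -- a reticulation child of u has a single leaf child
    have retcase : ∀ c, N u c → 2 ≤ inDeg N c →
        ∃ z, N c z ∧ outDeg N z = 0 ∧ ∀ w, N c w → w = z := by
      intro c hc h2
      have hco : outDeg N c = 1 := (hbin.retic_deg c h2).2
      obtain ⟨z, hz⟩ := Set.ncard_eq_one.mp hco
      have hNcz : N c z := by
        have : z ∈ {w | N c w} := by rw [hz]; rfl
        exact this
      have huniq : ∀ w, N c w → w = z := by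
        intro w hw
        have : w ∈ ({z} : Set V) := hz ▸ hw
        simpa using this
      obtain ⟨w, hw, hwin⟩ := htc c (by omega)
      have hwz := huniq w hw
      subst hwz
      have hzout : outDeg N w = 0 := by
        by_contra hne
        have hwITN : w ∈ ITN N := ⟨hwin, Nat.one_le_iff_ne_zero.mpr hne⟩
        have hwu := hmax w hwITN
          (Relation.ReflTransGen.head hc (Relation.ReflTransGen.single hNcz))
        subst hwu
        exact hphy.acyclic w (Relation.TransGen.head hc (Relation.TransGen.single hNcz))
      exact ⟨w, hNcz, hzout, huniq⟩
    -- tree-child at u: one child has indegree ≤ 1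
    obtain ⟨w, hw, hwin⟩ := htc u hu.2
    have hwleaf : outDeg N w = 0 := childcase w hw hwin
    rcases hch w hw with rfl | rfl
    · -- w = x is a leaf
      by_cases hy : inDeg N y ≤ 1
      · have hyleaf : outDeg N y = 0 := childcase y huy hy
        exact Or.inl ⟨hu.1, w, y, hxy, hux, huy, hwleaf, hyleaf, hch⟩
      · have h2 : 2 ≤ inDeg N y := by omega
        refine Or.inr ⟨hu.1, y, w, hxy.symm, huy, hux, h2, hwleaf,
          retcase y huy h2, fun a ha => (hch a ha).symm⟩
    · -- w = y is a leaf
      by_cases hx : inDeg N x ≤ 1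
      · have hxleaf : outDeg N x = 0 := childcase x hux hx
        exact Or.inl ⟨hu.1, x, w, hxy, hux, huy, hxleaf, hwleaf, hch⟩
      · have h2 : 2 ≤ inDeg N x := by omega
        exact Or.inr ⟨hu.1, x, w, hxy, hux, huy, h2, hwleaf, retcase x hux h2, hch⟩
end

section
/- There exists a binary orchard network containing a maximal internal tree node u (maximal with respect to the reachability order on internal tree nodes) such that no cherry reduction sequence of the network begins with a reduction rooted at u. Hence the equivalence 'terminal iff maximal' fails for general orchard networks. -/
open Set

open Phylo

namespace Stmt3Aux

/-- Edge list of the example network.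
Nodes: 0=ρ, 1=u, 2=a, 3=b, 4=h1, 5=h2, 6=x1, 7=x2, 8=ℓ. -/
def E0 : List (Fin 9 × Fin 9) :=
  [(0,1),(0,2),(1,4),(1,5),(2,3),(2,4),(3,5),(3,8),(4,6),(5,7)]

def E1 : List (Fin 9 × Fin 9) :=
  [(0,1),(0,2),(1,4),(1,5),(2,3),(2,4),(4,6)]

def E2 : List (Fin 9 × Fin 9) := [(0,1),(0,2),(2,3),(2,4)]

def E3 : List (Fin 9 × Fin 9) := [(0,1),(0,2)]

def N0 : Fin 9 → Fin 9 → Prop := fun a b => (a, b) ∈ E0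
def N1 : Fin 9 → Fin 9 → Prop := fun a b => (a, b) ∈ E1
def N2 : Fin 9 → Fin 9 → Prop := fun a b => (a, b) ∈ E2
def N3 : Fin 9 → Fin 9 → Prop := fun a b => (a, b) ∈ E3
def N4 : Fin 9 → Fin 9 → Prop := fun _ _ => False

instance : DecidableRel N0 := fun a b => by unfold N0; infer_instance
instance : DecidableRel N1 := fun a b => by unfold N1; infer_instance
instance : DecidableRel N2 := fun a b => by unfold N2; infer_instance
instance : DecidableRel N3 := fun a b => by unfold N3; infer_instance
instance : DecidableRel N4 := fun _ _ => instDecidableFalse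

lemma ncard_eq_card {α : Type*} (s : Set α) (t : Finset α)
    (h : ∀ x, x ∈ s ↔ x ∈ t) : s.ncard = t.card := by
  have hs : s = ↑t := Set.ext fun x => by simpa using h x
  rw [hs, Set.ncard_coe_finset]

lemma inDeg_eq (N : Fin 9 → Fin 9 → Prop) [DecidableRel N] (v : Fin 9) :
    inDeg N v = (Finset.univ.filter (fun u => N u v)).card :=
  ncard_eq_card _ _ (by simp)

lemma outDeg_eq (N : Fin 9 → Fin 9 → Prop) [DecidableRel N] (v : Fin 9) :
    outDeg N v = (Finset.univ.filter (fun w => N v w)).card :=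
  ncard_eq_card _ _ (by simp)

lemma reach_mem {V : Type*} {N : V → V → Prop} {S : Set V}
    (hc : ∀ a ∈ S, ∀ b, N a b → b ∈ S) {u v : V} (hu : u ∈ S)
    (h : Reach N u v) : v ∈ S := by
  induction h with
  | refl => exact hu
  | tail _ e ih => exact hc _ ih _ e

lemma reach_step {V : Type*} {N : V → V → Prop} {a b c : V}
    (h : N a b) (h2 : Reach N b c) : Reach N a c :=
  Relation.ReflTransGen.head h h2

lemma cr_eq (N : Fin 9 → Fin 9 → Prop) (u : Fin 9) (R : Finset (Fin 9))
    (N' : Fin 9 → Fin 9 → Prop)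
    (hu : u ∈ (R : Set (Fin 9)))
    (hreach : ∀ a ∈ R, Reach N u a)
    (hclosed : ∀ a ∈ R, ∀ b, N a b → b ∈ R)
    (hiff : ∀ a b, N' a b ↔ (N a b ∧ a ∉ R)) :
    CR N u = N' := by
  funext a b
  apply propext
  constructor
  · rintro ⟨h, hnr⟩
    refine (hiff a b).2 ⟨h, fun ha => hnr (hreach a ha)⟩
  · intro h'
    obtain ⟨hN, haR⟩ := (hiff a b).1 h'
    refine ⟨hN, fun hr => haR ?_⟩
    exact reach_mem (S := (R : Set (Fin 9))) (fun x hx b hb => hclosed x hx b hb) hu hr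

lemma inDeg_N0 : ∀ v, inDeg N0 v = ![0,1,1,1,2,2,1,1,1] v := by
  intro v
  fin_cases v <;> rw [inDeg_eq] <;> decide

lemma outDeg_N0 : ∀ v, outDeg N0 v = ![2,2,2,2,1,1,0,0,0] v := by
  intro v
  fin_cases v <;> rw [outDeg_eq] <;> decide

def rk : Fin 9 → ℕ := ![0,1,1,2,3,3,4,4,3]

lemma rk_mono : ∀ a b, N0 a b → rk a < rk b := by decide

lemma acyc : ∀ v, ¬ Relation.TransGen N0 v v := by
  have key : ∀ a b, Relation.TransGen N0 a b → rk a < rk b := by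
    intro a b h
    induction h with
    | single h => exact rk_mono _ _ h
    | tail _ e ih => exact lt_trans ih (rk_mono _ _ e)
  intro v hv
  exact lt_irrefl _ (key v v hv)

lemma root_reach : ∀ v, Reach N0 0 v := by
  intro v
  fin_cases v
  · exact .refl
  · exact reach_step (show N0 0 1 by decide) .refl
  · exact reach_step (show N0 0 2 by decide) .refl
  · exact reach_step (show N0 0 2 by decide) (reach_step (show N0 2 3 by decide) .refl)
  · exact reach_step (show N0 0 1 by decide) (reach_step (show N0 1 4 by decide) .refl)
  · exact reach_step (show N0 0 1 by decide) (reach_step (show N0 1 5 by decide) .refl)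
  · exact reach_step (show N0 0 1 by decide) (reach_step (show N0 1 4 by decide)
      (reach_step (show N0 4 6 by decide) .refl))
  · exact reach_step (show N0 0 1 by decide) (reach_step (show N0 1 5 by decide)
      (reach_step (show N0 5 7 by decide) .refl))
  · exact reach_step (show N0 0 2 by decide) (reach_step (show N0 2 3 by decide)
      (reach_step (show N0 3 8 by decide) .refl))

lemma e1 : CR N0 3 = N1 := by
  apply cr_eq N0 3 {3,5,7,8} N1
  · simp
  · intro a ha
    fin_cases ha
    · exact .refl
    · exact reach_step (show N0 3 5 by decide) .refl
    · exact reach_step (show N0 3 5 by decide) (reach_step (show N0 5 7 by decide) .refl)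
    · exact reach_step (show N0 3 8 by decide) .refl
  · decide
  · decide

lemma e2 : CR N1 1 = N2 := by
  apply cr_eq N1 1 {1,4,5,6} N2
  · simp
  · intro a ha
    fin_cases ha
    · exact .refl
    · exact reach_step (show N1 1 4 by decide) .refl
    · exact reach_step (show N1 1 5 by decide) .refl
    · exact reach_step (show N1 1 4 by decide) (reach_step (show N1 4 6 by decide) .refl)
  · decide
  · decide

lemma e3 : CR N2 2 = N3 := by
  apply cr_eq N2 2 {2,3,4} N3
  · simp
  · intro a ha
    fin_cases ha
    · exact .refl
    · exact reach_step (show N2 2 3 by decide) .refl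
    · exact reach_step (show N2 2 4 by decide) .refl
  · decide
  · decide

lemma e4 : CR N3 0 = N4 := by
  apply cr_eq N3 0 {0,1,2} N4
  · simp
  · intro a ha
    fin_cases ha
    · exact .refl
    · exact reach_step (show N3 0 1 by decide) .refl
    · exact reach_step (show N3 0 2 by decide) .refl
  · decide
  · decide

lemma term3 : IsTerminal N0 3 := by
  right
  refine ⟨by rw [inDeg_N0 3]; decide, 5, 8, by decide, by decide, by decide,
    by rw [inDeg_N0 5]; decide, by rw [outDeg_N0 8]; decide,
    ⟨7, by decide, by rw [outDeg_N0 7]; decide, by decide⟩, by decide⟩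

lemma term1 : IsTerminal N1 1 := by
  right
  refine ⟨by rw [inDeg_eq]; decide, 4, 5, by decide, by decide, by decide,
    by rw [inDeg_eq]; decide, by rw [outDeg_eq]; decide,
    ⟨6, by decide, by rw [outDeg_eq]; decide, by decide⟩, by decide⟩

lemma term2 : IsTerminal N2 2 := by
  left
  exact ⟨by rw [inDeg_eq]; decide, 3, 4, by decide, by decide, by decide,
    by rw [outDeg_eq]; decide, by rw [outDeg_eq]; decide, by decide⟩

lemma term0 : IsTerminal N3 0 := by
  left
  exact ⟨by rw [inDeg_eq]; decide, 1, 2, by decide, by decide, by decide,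
    by rw [outDeg_eq]; decide, by rw [outDeg_eq]; decide, by decide⟩

lemma orchard : IsOrchard N0 := by
  refine ⟨[3, 1, 2, 0], term3, ?_⟩
  rw [e1]
  refine ⟨term1, ?_⟩
  rw [e2]
  refine ⟨term2, ?_⟩
  rw [e3]
  refine ⟨term0, ?_⟩
  rw [e4]
  intro a b h
  exact h

lemma not_term1 : ¬ IsTerminal N0 1 := by
  have hch : ∀ w, N0 1 w → w = 4 ∨ w = 5 := by decide
  rintro (⟨_, x, y, _, hx, _, hox, _, _⟩ | ⟨_, h, y, _, _, hy, _, hoy, _, _⟩)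
  · rcases hch x hx with rfl | rfl <;> rw [outDeg_N0] at hox <;> exact absurd hox (by decide)
  · rcases hch y hy with rfl | rfl <;> rw [outDeg_N0] at hoy <;> exact absurd hoy (by decide)

lemma maximal1 : ∀ v ∈ ITN N0, Reach N0 1 v → v = 1 := by
  intro v hv hr
  have hS : ∀ a ∈ ({1,4,5,6,7} : Finset (Fin 9)), ∀ b, N0 a b →
      b ∈ ({1,4,5,6,7} : Finset (Fin 9)) := by decide
  have hm : v ∈ ({1,4,5,6,7} : Finset (Fin 9)) :=
    reach_mem (S := (({1,4,5,6,7} : Finset (Fin 9)) : Set (Fin 9)))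
      (fun a ha b hb => hS a ha b hb) (by simp) hr
  obtain ⟨hin, hout⟩ := hv
  rw [inDeg_N0] at hin
  rw [outDeg_N0] at hout
  fin_cases hm
  · rfl
  · exact absurd hin (by decide)
  · exact absurd hin (by decide)
  · exact absurd hout (by decide)
  · exact absurd hout (by decide)

end Stmt3Aux

/-- some binary orchard network has a maximal internal tree node
`u` such that no cherry reduction sequence begins at `u`. -/
theorem stmt3 :
    ∃ (V : Type) (_ : Fintype V) (N : V → V → Prop) (ρ : V),
      IsPhyloNet N ρ ∧ IsBinary N ρ ∧ IsOrchard N ∧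
      ∃ u ∈ ITN N, (∀ v ∈ ITN N, Reach N u v → v = u) ∧
        ∀ L : List V, IsCRSeq N L → L.head? ≠ some u := by
  refine ⟨Fin 9, inferInstance, Stmt3Aux.N0, 0, ?_, ?_, Stmt3Aux.orchard, 1, ?_, ?_, ?_⟩
  · refine ⟨Stmt3Aux.acyc, by rw [Stmt3Aux.inDeg_N0]; rfl, Stmt3Aux.root_reach, ?_, ?_⟩
    · have h : ∀ v : Fin 9, 2 ≤ ![0,1,1,1,2,2,1,1,1] v → ![2,2,2,2,1,1,0,0,0] v = 1 := by
        decide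
      intro v hv
      rw [Stmt3Aux.inDeg_N0] at hv
      rw [Stmt3Aux.outDeg_N0]
      exact h v hv
    · have h : ∀ v : Fin 9,
          ¬ (![0,1,1,1,2,2,1,1,1] v = 1 ∧ ![2,2,2,2,1,1,0,0,0] v = 1) := by decide
      intro v hv
      rw [Stmt3Aux.inDeg_N0, Stmt3Aux.outDeg_N0] at hv
      exact h v hv
  · refine ⟨?_, ?_, ?_⟩
    · have h : ∀ v : Fin 9, 2 ≤ ![0,1,1,1,2,2,1,1,1] v →
          ![0,1,1,1,2,2,1,1,1] v = 2 ∧ ![2,2,2,2,1,1,0,0,0] v = 1 := by decide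
      intro v hv
      rw [Stmt3Aux.inDeg_N0] at hv ⊢
      rw [Stmt3Aux.outDeg_N0]
      exact h v hv
    · have h : ∀ v : Fin 9, v ≠ 0 → ![0,1,1,1,2,2,1,1,1] v ≤ 1 →
          1 ≤ ![2,2,2,2,1,1,0,0,0] v →
          ![0,1,1,1,2,2,1,1,1] v = 1 ∧ ![2,2,2,2,1,1,0,0,0] v = 2 := by decide
      intro v hne hin hout
      rw [Stmt3Aux.inDeg_N0] at hin ⊢
      rw [Stmt3Aux.outDeg_N0] at hout ⊢
      exact h v hne hin hout
    · left
      rw [Stmt3Aux.outDeg_N0]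
      decide
  · constructor
    · rw [Stmt3Aux.inDeg_N0]; decide
    · rw [Stmt3Aux.outDeg_N0]; decide
  · exact Stmt3Aux.maximal1
  · intro L hL
    cases L with
    | nil => simp
    | cons a as =>
      simp only [List.head?_cons, ne_eq, Option.some.injEq]
      rintro rfl
      exact Stmt3Aux.not_term1 hL.1
end

section
/- Let N be a binary tree-child phylogenetic network, and let π = (u_0, u_1, ..., u_{s-1}) be any linear extension of the order-dual of the reachability poset on T(int N) (so u_{s-1} is the root). Then the sequence defined by N_0 = N and N_{i+1} = CR(N_i, u_i) is a well-defined cherry reduction sequence: at each step u_i is a terminal node of N_i, each N_{i+1} is again tree-child, and N_s is a single node. -/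
open Set

open Phylo

/-!
Reducing at `u` deletes exactly the out-edges of the descendants of `u`, so reducing along a
prefix of `L` leaves `N` with every edge out of a descendant of that prefix removed; deleting
out-edges keeps a network tree-child. When `u = L[k]` comes up, every internal tree node strictly
below `u` is earlier in `L`, so each tree-type descendant of `u` is now a leaf, while `u` keeps
its two children. A child of `u` that is not yet a leaf is a reticulation, whose unique child is of
tree type and hence a leaf; the tree-child property allows at most one such child, so `u` roots a
cherry or a reticulated cherry. At the end no edge is left, since the source of every edge is an
internal tree node or is reachable from the root.
-/

namespace Phylo

variable {V : Type*} {N : V → V → Prop}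

section Prune

variable {S : List V} {u a b : V}

def reachSet (N : V → V → Prop) (S : List V) : Set V := {a | ∃ u ∈ S, Reach N u a}

def prune (N : V → V → Prop) (S : List V) : V → V → Prop :=
  fun a b => N a b ∧ a ∉ reachSet N S

lemma mem_reachSet_of_reach (ha : a ∈ reachSet N S) (h : Reach N a b) : b ∈ reachSet N S := by
  obtain ⟨u, hu, hr⟩ := ha
  exact ⟨u, hu, hr.trans h⟩

lemma notMem_reachSet_of_edge (hab : N a b) (hb : b ∉ reachSet N S) : a ∉ reachSet N S :=
  fun ha => hb (mem_reachSet_of_reach ha (.single hab))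

lemma prune_iff_of_notMem (ha : a ∉ reachSet N S) : prune N S a b ↔ N a b :=
  and_iff_left ha

lemma reach_prune_iff (ha : a ∉ reachSet N S) : Reach (prune N S) u a ↔ Reach N u a := by
  refine ⟨Relation.ReflTransGen.mono (fun _ _ (h : prune N S _ _) => h.1) _ _, fun h => ?_⟩
  induction h with
  | refl => exact .refl
  | tail _ hbc ih =>
    have hb := notMem_reachSet_of_edge hbc ha
    exact (ih hb).tail ⟨hbc, hb⟩

lemma CR_prune (N : V → V → Prop) (S : List V) (u : V) :
    CR (prune N S) u = prune N (S ++ [u]) := by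
  funext a b
  simp only [CR, prune, reachSet, Set.mem_ofPred_eq, List.mem_append, List.mem_singleton,
    or_and_right, exists_or, exists_eq_left, not_or]
  apply propext
  constructor
  · rintro ⟨⟨hab, ha⟩, hua⟩
    exact ⟨hab, ha, fun h => hua ((reach_prune_iff ha).mpr h)⟩
  · rintro ⟨hab, ha, hua⟩
    exact ⟨⟨hab, ha⟩, fun h => hua ((reach_prune_iff ha).mp h)⟩

lemma foldl_CR_eq_prune (N : V → V → Prop) (S : List V) : S.foldl CR N = prune N S := by
  induction S using List.reverseRecOn with
  | nil => funext a b; simp [prune, reachSet]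
  | append_singleton S u ih => rw [List.foldl_append, ih, List.foldl_cons, List.foldl_nil, CR_prune]

lemma outDeg_prune_of_mem (ha : a ∈ reachSet N S) : outDeg (prune N S) a = 0 := by
  rw [outDeg, show {w | prune N S a w} = ∅ from Set.eq_empty_of_forall_notMem fun _ h => h.2 ha,
    Set.ncard_empty]

lemma outDeg_prune_of_notMem (ha : a ∉ reachSet N S) : outDeg (prune N S) a = outDeg N a := by
  simp only [outDeg, prune_iff_of_notMem ha]

lemma inDeg_prune_of_notMem (hb : b ∉ reachSet N S) : inDeg (prune N S) b = inDeg N b := by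
  unfold inDeg
  congr 1
  ext a
  exact and_iff_left_of_imp fun hab => notMem_reachSet_of_edge hab hb

lemma inDeg_prune_le [Finite V] : inDeg (prune N S) b ≤ inDeg N b :=
  Set.ncard_le_ncard (fun _ h => h.1)

lemma one_le_outDeg_iff_s6 [Finite V] : 1 ≤ outDeg N a ↔ ∃ b, N a b :=
  Set.ncard_pos

lemma IsTreeChild.prune [Finite V] (htc : IsTreeChild N) (S : List V) :
    IsTreeChild (prune N S) := by
  intro a ha
  obtain ⟨b, hab, haS⟩ := one_le_outDeg_iff_s6.mp ha
  obtain ⟨c, hac, hc⟩ := htc a (one_le_outDeg_iff_s6.mpr ⟨b, hab⟩)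
  exact ⟨c, ⟨hac, haS⟩, inDeg_prune_le.trans hc⟩

end Prune

lemma IsBinary.outDeg_eq_two {ρ u : V} (hbin : IsBinary N ρ) (hu : u ∈ ITN N) :
    outDeg N u = 2 := by
  by_cases hur : u = ρ
  · subst hur
    exact hbin.root_deg.resolve_right (by have := hu.2; omega)
  · exact (hbin.tree_deg u hur hu.1 hu.2).2

lemma exists_children_of_outDeg_eq_two {u : V} (h : outDeg N u = 2) :
    ∃ x y, x ≠ y ∧ N u x ∧ N u y ∧ ∀ w, N u w → w = x ∨ w = y := by
  obtain ⟨x, y, hxy, hset⟩ := Set.ncard_eq_two.mp h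
  have hmem : ∀ w, N u w ↔ w = x ∨ w = y := fun w => Set.ext_iff.mp hset w
  exact ⟨x, y, hxy, (hmem x).mpr (.inl rfl), (hmem y).mpr (.inr rfl), fun w => (hmem w).mp⟩

lemma exists_child_of_outDeg_eq_one {u : V} (h : outDeg N u = 1) :
    ∃ c, N u c ∧ ∀ w, N u w → w = c := by
  obtain ⟨c, hset⟩ := Set.ncard_eq_one.mp h
  have hmem : ∀ w, N u w ↔ w = c := fun w => Set.ext_iff.mp hset w
  exact ⟨c, (hmem c).mpr rfl, fun w => (hmem w).mp⟩

section Terminal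

variable {S : List V} {u : V}
  (hbelow : ∀ v ∈ ITN N, Relation.TransGen N u v → v ∈ reachSet N S)
include hbelow

lemma outDeg_prune_eq_zero_of_transGen {w : V} (hw : inDeg N w ≤ 1)
    (huw : Relation.TransGen N u w) : outDeg (prune N S) w = 0 := by
  by_cases hwS : w ∈ reachSet N S
  · exact outDeg_prune_of_mem hwS
  · rw [outDeg_prune_of_notMem hwS]
    by_contra hpos
    exact hwS (hbelow w ⟨hw, Nat.one_le_iff_ne_zero.mpr hpos⟩ huw)

variable [Finite V] (htc : IsTreeChild N) (hu : u ∉ reachSet N S) (hin : inDeg N u ≤ 1)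
include htc hu hin

lemma isRetCherryRoot_prune {h y : V} (hhy : h ≠ y) (huh : N u h) (huy : N u y)
    (hch : ∀ w, N u w → w = h ∨ w = y) (hret : 2 ≤ inDeg N h) (hhout : outDeg N h = 1)
    (hh : h ∉ reachSet N S) (hy : outDeg (prune N S) y = 0) :
    IsRetCherryRoot (prune N S) u := by
  obtain ⟨c, hhc, hc⟩ := exists_child_of_outDeg_eq_one hhout
  obtain ⟨c', hhc', hc'⟩ := htc h (by omega)
  obtain rfl := (hc c' hhc').symm
  refine ⟨inDeg_prune_le.trans hin, h, y, hhy, ⟨huh, hu⟩, ⟨huy, hu⟩, ?_, hy,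
    ⟨c, ⟨hhc, hh⟩, ?_, fun w hw => hc w hw.1⟩, fun w hw => hch w hw.1⟩
  · rwa [inDeg_prune_of_notMem hh]
  · exact outDeg_prune_eq_zero_of_transGen hbelow hc' ((Relation.TransGen.single huh).tail hhc)

lemma isTerminal_prune (hret : ∀ v, 2 ≤ inDeg N v → outDeg N v = 1) (hout : outDeg N u = 2) :
    IsTerminal (prune N S) u := by
  obtain ⟨x, y, hxy, hux, huy, hch⟩ := exists_children_of_outDeg_eq_two hout
  have hleaf_or_ret : ∀ w, N u w →
      outDeg (prune N S) w = 0 ∨ (2 ≤ inDeg N w ∧ w ∉ reachSet N S) := by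
    intro w huw
    by_cases hwS : w ∈ reachSet N S
    · exact .inl (outDeg_prune_of_mem hwS)
    rcases le_or_gt (inDeg N w) 1 with hw | hw
    · exact .inl (outDeg_prune_eq_zero_of_transGen hbelow hw (.single huw))
    · exact .inr ⟨hw, hwS⟩
  rcases hleaf_or_ret x hux with hx | hx <;> rcases hleaf_or_ret y huy with hy | hy
  · exact .inl ⟨inDeg_prune_le.trans hin, x, y, hxy, ⟨hux, hu⟩, ⟨huy, hu⟩, hx, hy,
      fun w hw => hch w hw.1⟩
  · exact .inr (isRetCherryRoot_prune hbelow htc hu hin hxy.symm huy hux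
      (fun w hw => (hch w hw).symm) hy.1 (hret y hy.1) hy.2 hx)
  · exact .inr (isRetCherryRoot_prune hbelow htc hu hin hxy hux huy hch hx.1 (hret x hx.1) hx.2 hy)
  · obtain ⟨c, huc, hc⟩ := htc u (by omega)
    rcases hch c huc with rfl | rfl <;> omega

end Terminal

lemma exists_mem_ITN_reach {ρ a b : V} [Finite V] (hphy : IsPhyloNet N ρ) (hab : N a b) :
    ∃ u ∈ ITN N, Reach N u a := by
  rcases le_or_gt (inDeg N a) 1 with ha | ha
  · exact ⟨a, ⟨ha, one_le_outDeg_iff_s6.mpr ⟨b, hab⟩⟩, .refl⟩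
  have hρa := hphy.root_connects a
  refine ⟨ρ, ⟨by rw [hphy.root_indeg]; omega, ?_⟩, hρa⟩
  rcases hρa.cases_head with rfl | ⟨c, hρc, -⟩
  · rw [hphy.root_indeg] at ha
    omega
  · exact one_le_outDeg_iff_s6.mpr ⟨c, hρc⟩

namespace IsDualLinExtList

variable {L : List V} (hL : IsDualLinExtList N L)
include hL

lemma getElem_notMem_reachSet_take {k : ℕ} (hk : k < L.length) :
    L[k] ∉ reachSet N (L.take k) := by
  rintro ⟨w, hw, hr⟩
  obtain ⟨i, hi, rfl⟩ := List.mem_take_iff_getElem.mp hw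
  have := hL.2.2 k i hk (by omega) hr
  omega

lemma mem_reachSet_take_of_transGen (hacyc : ∀ v, ¬ Relation.TransGen N v v) {k : ℕ}
    (hk : k < L.length) (v : V) (hv : v ∈ ITN N) (hkv : Relation.TransGen N L[k] v) :
    v ∈ reachSet N (L.take k) := by
  obtain ⟨j, hj, rfl⟩ := List.mem_iff_getElem.mp ((hL.2.1 v).mpr hv)
  have hjk : j ≤ k := hL.2.2 j k hj hk hkv.to_reflTransGen
  have hjk' : j ≠ k := by
    rintro rfl
    exact hacyc _ hkv
  exact ⟨L[j], List.mem_take_iff_getElem.mpr ⟨j, by omega, rfl⟩, .refl⟩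

lemma not_prune [Finite V] {ρ : V} (hphy : IsPhyloNet N ρ) (a b : V) : ¬ prune N L a b := by
  rintro ⟨hab, ha⟩
  obtain ⟨u, hu, hua⟩ := exists_mem_ITN_reach hphy hab
  exact ha ⟨u, (hL.2.1 u).mpr hu, hua⟩

end IsDualLinExtList

lemma isCRSeq_of_forall_isTerminal {L : List V}
    (hterm : ∀ k (hk : k < L.length), IsTerminal ((L.take k).foldl CR N) L[k])
    (hend : ∀ a b, ¬ L.foldl CR N a b) : IsCRSeq N L := by
  induction L generalizing N with
  | nil => exact hend
  | cons u us ih =>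
    exact ⟨hterm 0 (by simp), ih (fun k hk => hterm (k + 1) (by simpa using hk)) hend⟩

end Phylo

/-- any linear extension of the order-dual of the reachability
poset on `T(int N)` of a binary tree-child network yields a valid cherry
reduction sequence, all whose intermediate networks are again tree-child. -/
theorem stmt6 {V : Type*} [Fintype V] (N : V → V → Prop) (ρ : V)
    (hphy : IsPhyloNet N ρ) (hbin : IsBinary N ρ) (htc : IsTreeChild N)
    (L : List V) (hL : IsDualLinExtList N L) :
    IsCRSeq N L ∧ ∀ n : ℕ, IsTreeChild (List.foldl CR N (L.take n)) := by
  refine ⟨isCRSeq_of_forall_isTerminal (fun k hk => ?_) fun a b => ?_, fun n => ?_⟩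
  · have hu : L[k] ∈ ITN N := (hL.2.1 _).mp (L.getElem_mem hk)
    rw [foldl_CR_eq_prune]
    exact isTerminal_prune (hL.mem_reachSet_take_of_transGen hphy.acyclic hk) htc
      (hL.getElem_notMem_reachSet_take hk) hu.1 hphy.retic_out (hbin.outDeg_eq_two hu)
  · rw [foldl_CR_eq_prune]
    exact hL.not_prune hphy a b
  · rw [foldl_CR_eq_prune]
    exact htc.prune _
end

section
/- Let N be a binary tree-child phylogenetic network. The map φ from the cover graph of T(int N) to the quotient graph (int(N) minus reticulations of out-degree 0, with reticulation-to-tree-child edges contracted) given by u ↦ [u] is bijective on nodes: every equivalence class is either a singleton tree node or a pair {tree node, reticulation}, and distinct internal tree nodes map to distinct classes. -/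
open Set

open Phylo


namespace Phylo

/-- Equivalence class of an internal tree node in the quotient contracting each
edge from a reticulation to its tree-node child. -/
def cls {V : Type*} (N : V → V → Prop) (u : V) : Set V :=
  {u} ∪ {h | 2 ≤ inDeg N h ∧ N h u}

/-- Nodes of `int N` kept after removing reticulations of out-degree 0 in `int N`. -/
def keptNodes {V : Type*} (N : V → V → Prop) : Set V :=
  {v | 1 ≤ outDeg N v ∧ (inDeg N v ≤ 1 ∨ ∃ w, N v w ∧ 1 ≤ outDeg N w)}

/-- Adjacency in the quotient (contracted) graph. -/
def QAdj {V : Type*} (N : V → V → Prop) (S T : Set V) : Prop :=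
  S ≠ T ∧ ∃ a ∈ S, ∃ b ∈ T, N a b ∧ a ∈ keptNodes N ∧ b ∈ keptNodes N

/-- Node set of the quotient graph. -/
def clsNodes {V : Type*} (N : V → V → Prop) : Set (Set V) :=
  {S | ∃ u ∈ ITN N, S = cls N u}

end Phylo


/-- the map u ↦ [u] is bijective onto the nodes of the quotient
graph: every class is a singleton tree node or a {tree node, reticulation}
pair, and distinct internal tree nodes have distinct classes. -/
theorem stmt8 {V : Type*} [Fintype V] (N : V → V → Prop) (ρ : V)
    (hphy : IsPhyloNet N ρ) (hbin : IsBinary N ρ) (htc : IsTreeChild N) :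
    (∀ u ∈ ITN N, cls N u = {u} ∨
      ∃ h, 2 ≤ inDeg N h ∧ N h u ∧ cls N u = {u, h}) ∧
    (∀ u ∈ ITN N, ∀ v ∈ ITN N, cls N u = cls N v → u = v) := by
  constructor
  · intro u hu
    by_cases hS : {h | 2 ≤ inDeg N h ∧ N h u} = (∅ : Set V)
    · left; simp [cls, hS]
    · right
      obtain ⟨h, hh⟩ := Set.nonempty_iff_ne_empty.2 hS
      refine ⟨h, hh.1, hh.2, ?_⟩
      have hpar : ∀ a b, N a u → N b u → a = b := by
        have := hu.1
        rw [inDeg, Set.ncard_le_one (Set.toFinite _)] at this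
        exact fun a b ha hb => this a ha b hb
      apply Set.eq_of_subset_of_subset
      · rintro x (rfl | hx)
        · exact Or.inl rfl
        · exact Or.inr (hpar x h hx.2 hh.2)
      · rintro x (rfl | rfl)
        · exact Or.inl rfl
        · exact Or.inr hh
  · intro u hu v hv h
    have : v ∈ cls N u := by rw [h]; exact Or.inl rfl
    rcases this with rfl | hvu
    · rfl
    · have := hv.1
      exact absurd hvu.1 (by omega)
end

section
/- Let N be a binary phylogenetic network, H' a subgraph of N, and H = H'/∼ a minor of the underlying graph of N, endowed with an orientation induced by N (each edge [u][v] of H oriented according to some witnessing edge of N between the classes). If α_1, ..., α_d, β are nodes of H with directed edges α_i → β for all i = 1, ..., d, then the equivalence class β contains at least d - 1 reticulation nodes of N. -/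
open Set

open Phylo

/-!
Let `S` be the class of `β` and `r` the number of reticulations in it, and count the arcs of `N`
entering `S`. In a binary network every node of `S` has in-degree at most one unless it is a
reticulation, which has in-degree two, so there are at most `|S| + r` such arcs. On the other hand,
`S` induces a connected subgraph, so at least `|S| - 1` of them have both ends in `S`, and the `d`
witnessing arcs of the edges `αᵢ → β` start in the pairwise disjoint classes `αᵢ`, outside `S`.
Hence `|S| - 1 + d ≤ |S| + r`.
-/

namespace SimpleGraph

variable {W : Type*} {G : SimpleGraph W}

lemma Preconnected.card_vert_le_card_edgeSet_add_one (h : G.Preconnected) :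
    Nat.card W ≤ Nat.card G.edgeSet + 1 := by
  cases isEmpty_or_nonempty W
  · simp
  · exact (Connected.mk h).card_vert_le_card_edgeSet_add_one

end SimpleGraph

namespace Phylo

variable {V : Type*}

theorem IsBinary.inDeg_le_two {N : V → V → Prop} {ρ : V} (hbin : IsBinary N ρ) (v : V) :
    inDeg N v ≤ 2 := by
  by_cases h : 2 ≤ inDeg N v
  · exact (hbin.retic_deg v h).1.le
  · omega

section Arcs

variable (N : V → V → Prop) (S : Set V)

def inArcs : Set (V × V) := {p | N p.1 p.2 ∧ p.2 ∈ S}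

def innerArcs : Set (V × V) := {p | N p.1 p.2 ∧ p.1 ∈ S ∧ p.2 ∈ S}

open Classical in
theorem ncard_inArcs_eq_sum_inDeg [Fintype V] :
    (inArcs N S).ncard = ∑ v ∈ S.toFinset, inDeg N v := by
  have harcs : inArcs N S = ↑(Finset.univ.filter fun p : V × V => N p.1 p.2 ∧ p.2 ∈ S) := by
    ext; simp [inArcs]
  have hdeg (v : V) : inDeg N v = ∑ u, if N u v then 1 else 0 := by
    rw [inDeg, ← Finset.card_filter, ← Set.ncard_coe_finset, Finset.coe_filter_univ]
  rw [harcs, Set.ncard_coe_finset, Finset.card_filter, Fintype.sum_prod_type, Finset.sum_comm,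
    ← Finset.univ_inter S.toFinset, ← Finset.sum_ite_mem]
  refine Finset.sum_congr rfl fun v _ => ?_
  by_cases hv : v ∈ S <;> simp [hv, hdeg]

theorem ncard_inArcs_le_ncard_add_ncard_reticulations [Finite V]
    (hdeg : ∀ v ∈ S, inDeg N v ≤ 2) :
    (inArcs N S).ncard ≤ S.ncard + (S ∩ {v | 2 ≤ inDeg N v}).ncard := by
  classical
  have := Fintype.ofFinite V
  calc (inArcs N S).ncard = ∑ v ∈ S.toFinset, inDeg N v := ncard_inArcs_eq_sum_inDeg N S
    _ ≤ ∑ v ∈ S.toFinset, (1 + if 2 ≤ inDeg N v then 1 else 0) := by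
      refine Finset.sum_le_sum fun v hv => ?_
      have := hdeg v (Set.mem_toFinset.mp hv)
      split_ifs <;> omega
    _ = S.ncard + (S ∩ {v | 2 ≤ inDeg N v}).ncard := by
      rw [Finset.sum_add_distrib, Finset.sum_boole]
      simp only [Finset.sum_const, smul_eq_mul, mul_one]
      rw [Nat.cast_id, ← Set.ncard_eq_toFinset_card', ← Set.ncard_coe_finset]
      congr 2
      ext
      simp

theorem ncard_edgeSet_induce_le_ncard_innerArcs [Finite V] :
    ((underlying N).induce S).edgeSet.ncard ≤ (innerArcs N S).ncard := by
  calc ((underlying N).induce S).edgeSet.ncard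
      = (Sym2.map Subtype.val '' ((underlying N).induce S).edgeSet).ncard :=
        (Set.ncard_image_of_injective _ (Sym2.map.injective Subtype.val_injective)).symm
    _ ≤ ((fun p : V × V => s(p.1, p.2)) '' innerArcs N S).ncard := by
      refine Set.ncard_le_ncard ?_ ((Set.toFinite (innerArcs N S)).image _)
      rintro _ ⟨e, he, rfl⟩
      induction e using Sym2.ind with
      | _ u v =>
        obtain ⟨-, huv | hvu⟩ := he
        · exact ⟨(u, v), ⟨huv, u.2, v.2⟩, rfl⟩
        · exact ⟨(v, u), ⟨hvu, v.2, u.2⟩, Sym2.eq_swap⟩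
    _ ≤ (innerArcs N S).ncard := Set.ncard_image_le (Set.toFinite (innerArcs N S))

theorem ncard_le_ncard_innerArcs_add_one [Finite V]
    (h : ((underlying N).induce S).Preconnected) :
    S.ncard ≤ (innerArcs N S).ncard + 1 := by
  have := h.card_vert_le_card_edgeSet_add_one
  rw [Nat.card_coe_set_eq, Nat.card_coe_set_eq] at this
  have := ncard_edgeSet_induce_le_ncard_innerArcs N S
  omega

theorem ncard_innerArcs_add_card_le_ncard_inArcs [Finite V] {ι : Type*} [Finite ι]
    (x y : ι → V) (hx : Function.Injective x)
    (hxS : ∀ i, x i ∉ S) (hyS : ∀ i, y i ∈ S) (hN : ∀ i, N (x i) (y i)) :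
    (innerArcs N S).ncard + Nat.card ι ≤ (inArcs N S).ncard := by
  have hinj : Function.Injective fun i => (x i, y i) := fun i j h => hx (Prod.ext_iff.mp h).1
  rw [← Set.ncard_range_of_injective hinj, ← Set.ncard_union_eq]
  · refine Set.ncard_le_ncard (Set.union_subset ?_ ?_)
    · exact fun p hp => ⟨hp.1, hp.2.2⟩
    · rintro _ ⟨i, rfl⟩
      exact ⟨hN i, hyS i⟩
  · rw [Set.disjoint_right]
    rintro _ ⟨i, rfl⟩ hp
    exact hxS i hp.2.1

end Arcs

end Phylo

theorem stmt12_general {V : Type*} [Fintype V] {β : Type*} (N : V → V → Prop) (ρ : V)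
    (hbin : IsBinary N ρ)
    (f : β → Set V) (D : β → β → Prop)
    (hconn : ∀ b, ((underlying N).induce (f b)).Preconnected)
    (hdisj : ∀ b b', b ≠ b' → Disjoint (f b) (f b'))
    (hor : ∀ b b', D b b' → ∃ x ∈ f b, ∃ y ∈ f b', N x y)
    (d : ℕ) (a : Fin d → β) (ha : Function.Injective a) (b₀ : β)
    (hab : ∀ i, a i ≠ b₀) (hedges : ∀ i, D (a i) b₀) :
    d - 1 ≤ (f b₀ ∩ {v | 2 ≤ inDeg N v}).ncard := by
  choose x hx y hy hxy using fun i => hor _ _ (hedges i)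
  have hx_inj : Function.Injective x := fun i j hij =>
    ha.eq_iff.mp <| by_contra fun hne => Set.disjoint_left.mp (hdisj _ _ hne) (hx i) (hij ▸ hx j)
  have hxS (i : Fin d) : x i ∉ f b₀ := Set.disjoint_left.mp (hdisj _ _ (hab i)) (hx i)
  have hinner := ncard_le_ncard_innerArcs_add_one N (f b₀) (hconn b₀)
  have hsplit := ncard_innerArcs_add_card_le_ncard_inArcs N (f b₀) x y hx_inj hxS hy hxy
  have hin := ncard_inArcs_le_ncard_add_ncard_reticulations N (f b₀) fun v _ =>
    hbin.inDeg_le_two v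
  rw [Nat.card_fin] at hsplit
  omega

/-- in an oriented minor of a binary phylogenetic network given
by branch sets `f` and orientation `D`, if `d` distinct nodes all have an edge
directed into a node `β`, then the class of `β` contains at least `d - 1`
reticulations of the network. -/
theorem stmt12 {V : Type*} [Fintype V] {β : Type*} (N : V → V → Prop) (ρ : V)
    (hphy : IsPhyloNet N ρ) (hbin : IsBinary N ρ)
    (f : β → Set V) (D : β → β → Prop)
    (hne : ∀ b, (f b).Nonempty)
    (hconn : ∀ b, ((underlying N).induce (f b)).Preconnected)
    (hdisj : ∀ b b', b ≠ b' → Disjoint (f b) (f b'))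
    (hor : ∀ b b', D b b' → ∃ x ∈ f b, ∃ y ∈ f b', N x y)
    (d : ℕ) (a : Fin d → β) (ha : Function.Injective a) (b₀ : β)
    (hab : ∀ i, a i ≠ b₀) (hedges : ∀ i, D (a i) b₀) :
    d - 1 ≤ (f b₀ ∩ {v | 2 ≤ inDeg N v}).ncard :=
  stmt12_general N ρ hbin f D hconn hdisj hor d a ha b₀ hab hedges
end
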